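/- arXiv:0708.4340 — 3 statements merged into one kernel-verified Lean document; each statement's English description precedes it below -/
import Mathlib

section
/- Let c₁,…,c_k be integers all greater than 1, and let L₁,…,L_{k'} be positive-definite binary integer-matrix lattices each of whose minimum (smallest nonzero represented value) is greater than 1. Then the orthogonal sum ⟨1⟩ ⊥ ⟨c₁⟩ ⊥ ⋯ ⊥ ⟨c_k⟩ ⊥ L₁ ⊥ ⋯ ⊥ L_{k'} does not represent the binary form ⟨1,1⟩ = x² + y². -/
open Matrix

/-- `G` (Gram matrix of a `ℤ`-lattice) represents the quadratic form with Gram matrix `q`: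
there is a `ℤ`-linear injection preserving the bilinear forms. -/
def Represents {ι κ : Type*} [Fintype ι] [Fintype κ]
    (G : Matrix ι ι ℤ) (q : Matrix κ κ ℤ) : Prop :=
  ∃ S : Matrix ι κ ℤ, Function.Injective S.mulVec ∧ Sᵀ * G * S = q

/-- A symmetric positive-definite integer Gram matrix. -/
def IsPosDefForm {ι : Type*} [Fintype ι] (G : Matrix ι ι ℤ) : Prop :=
  G.IsSymm ∧ ∀ x : ι → ℤ, x ≠ 0 → 0 < x ⬝ᵥ G.mulVec x

/-- The binary form `[a,b,c] = a x² + 2 b x y + c y²` with Gram matrix `((a,b),(b,c))`. -/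
def bin (a b c : ℤ) : Matrix (Fin 2) (Fin 2) ℤ := !![a, b; b, c]

/-!
A vector of norm 1 in `⟨1⟩ ⊥ M`, where `M = ⟨c₁⟩ ⊥ ⋯ ⊥ ⟨c_k⟩ ⊥ L₁ ⊥ ⋯ ⊥ L_{k'}` is positive
with minimum `> 1`, must have zero `M`-component, since otherwise its norm would be at least 2.
Hence every norm-one vector is a multiple of the first basis vector `e₀`. The two columns of a
representation of `⟨1,1⟩` would then be `p e₀` and `q e₀`, whose inner product `p q` squares to
`p² q² = 1`, so they cannot be orthogonal.
-/

namespace Matrix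

variable {R ι κ : Type*} [CommSemiring R] [Fintype ι] [Fintype κ]

theorem dotProduct_fromBlocks_zero_mulVec (A : Matrix ι ι R) (D : Matrix κ κ R)
    (x : ι ⊕ κ → R) :
    x ⬝ᵥ fromBlocks A 0 0 D *ᵥ x
      = (x ∘ Sum.inl) ⬝ᵥ A *ᵥ (x ∘ Sum.inl) + (x ∘ Sum.inr) ⬝ᵥ D *ᵥ (x ∘ Sum.inr) := by
  simp [fromBlocks_mulVec, dotProduct, Fintype.sum_sum_type]

theorem dotProduct_diagonal_mulVec [DecidableEq ι] (d x : ι → R) :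
    x ⬝ᵥ diagonal d *ᵥ x = ∑ i, d i * x i ^ 2 := by
  simp [mulVec_diagonal, dotProduct, sq, mul_left_comm]

theorem dotProduct_blockDiagonal_mulVec [DecidableEq κ] (L : κ → Matrix ι ι R)
    (x : ι × κ → R) :
    x ⬝ᵥ blockDiagonal L *ᵥ x = ∑ j, (fun i => x (i, j)) ⬝ᵥ L j *ᵥ (fun i => x (i, j)) := by
  simp only [dotProduct, mulVec, blockDiagonal_apply, ite_mul, zero_mul, Fintype.sum_prod_type,
    Finset.sum_ite_eq, Finset.mem_univ, ↓reduceIte, Finset.mul_sum]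
  exact Finset.sum_comm

omit [Fintype κ] in
theorem transpose_mul_mul_apply (S : Matrix ι κ R) (G : Matrix ι ι R) (a b : κ) :
    (Sᵀ * G * S) a b = (fun i => S i a) ⬝ᵥ G *ᵥ (fun i => S i b) := by
  rw [mul_apply', dotProduct_mulVec]
  rfl

end Matrix

section

variable {ι κ : Type*} [Fintype ι] [Fintype κ]

def OneLtMin (G : Matrix ι ι ℤ) : Prop :=
  ∀ x : ι → ℤ, x ≠ 0 → 1 < x ⬝ᵥ G *ᵥ x

theorem OneLtMin.nonneg {G : Matrix ι ι ℤ} (hG : OneLtMin G) (x : ι → ℤ) :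
    0 ≤ x ⬝ᵥ G *ᵥ x := by
  rcases eq_or_ne x 0 with rfl | hx
  · simp
  · exact zero_le_one.trans (hG x hx).le

theorem dotProduct_diagonal_mulVec_nonneg [DecidableEq ι] {d : ι → ℤ} (hd : ∀ i, 0 ≤ d i)
    (x : ι → ℤ) : 0 ≤ x ⬝ᵥ diagonal d *ᵥ x := by
  rw [dotProduct_diagonal_mulVec]
  exact Finset.sum_nonneg fun i _ => mul_nonneg (hd i) (sq_nonneg _)

theorem oneLtMin_diagonal [DecidableEq ι] {d : ι → ℤ} (hd : ∀ i, 1 < d i) :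
    OneLtMin (diagonal d) := by
  intro x hx
  obtain ⟨i, hi⟩ := Function.ne_iff.mp hx
  have hterm : 1 < d i * x i ^ 2 := by nlinarith [hd i, sq_pos_of_ne_zero hi]
  have hnonneg (j : ι) : 0 ≤ d j * x j ^ 2 := mul_nonneg (zero_le_one.trans (hd j).le) (sq_nonneg _)
  rw [dotProduct_diagonal_mulVec]
  exact hterm.trans_le (Finset.single_le_sum (fun j _ => hnonneg j) (Finset.mem_univ i))

theorem oneLtMin_blockDiagonal [DecidableEq κ] {L : κ → Matrix ι ι ℤ}
    (hL : ∀ j, OneLtMin (L j)) : OneLtMin (blockDiagonal L) := by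
  intro x hx
  obtain ⟨⟨i, j⟩, hij⟩ := Function.ne_iff.mp hx
  have hblock := hL j (fun i => x (i, j)) (Function.ne_iff.mpr ⟨i, hij⟩)
  rw [dotProduct_blockDiagonal_mulVec]
  exact hblock.trans_le
    (Finset.single_le_sum (fun j _ => (hL j).nonneg _) (Finset.mem_univ j))

theorem mem_span_sumElim_of_fromBlocks_norm_eq_one {A : Matrix ι ι ℤ} {D : Matrix κ κ ℤ}
    {v : ι → ℤ} (hA : ∀ y, 0 ≤ y ⬝ᵥ A *ᵥ y) (hA_one : ∀ y, y ⬝ᵥ A *ᵥ y = 1 → y ∈ ℤ ∙ v)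
    (hD : OneLtMin D) {x : ι ⊕ κ → ℤ} (hx : x ⬝ᵥ fromBlocks A 0 0 D *ᵥ x = 1) :
    x ∈ ℤ ∙ Sum.elim v 0 := by
  rw [dotProduct_fromBlocks_zero_mulVec] at hx
  have hinr : x ∘ Sum.inr = 0 := by
    by_contra h
    linarith [hA (x ∘ Sum.inl), hD _ h]
  obtain ⟨a, ha⟩ := Submodule.mem_span_singleton.mp (hA_one _ (by simpa [hinr] using hx))
  refine Submodule.mem_span_singleton.mpr ⟨a, ?_⟩
  rw [← Sum.elim_comp_inl_inr x, ← ha, hinr]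
  ext (i | i) <;> simp

theorem not_represents_bin_one_zero_one_of_mem_span {G : Matrix ι ι ℤ} {v : ι → ℤ}
    (hG : ∀ x, x ⬝ᵥ G *ᵥ x = 1 → x ∈ ℤ ∙ v) : ¬ Represents G (bin 1 0 1) := by
  rintro ⟨S, -, hS⟩
  have hcol (a b : Fin 2) : (fun i => S i a) ⬝ᵥ G *ᵥ (fun i => S i b) = bin 1 0 1 a b := by
    rw [← transpose_mul_mul_apply, hS]
  obtain ⟨p, hp⟩ := Submodule.mem_span_singleton.mp (hG _ (hcol 0 0))
  obtain ⟨q, hq⟩ := Submodule.mem_span_singleton.mp (hG _ (hcol 1 1))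
  set n := v ⬝ᵥ G *ᵥ v
  have hline (a b : ℤ) : (a • v) ⬝ᵥ G *ᵥ (b • v) = a * b * n := by
    rw [smul_dotProduct, mulVec_smul, dotProduct_smul, smul_eq_mul, smul_eq_mul]
    ring
  have h00 : p * p * n = 1 := by rw [← hline, hp]; exact hcol 0 0
  have h11 : q * q * n = 1 := by rw [← hline, hq]; exact hcol 1 1
  have h01 : p * q * n = 0 := by rw [← hline, hp, hq]; exact hcol 0 1
  have key : (p * p * n) * (q * q * n) = (p * q * n) ^ 2 := by ring
  rw [h00, h11, h01] at key
  norm_num at key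

end

theorem truant_one_one_general {k k' : ℕ} (c : Fin k → ℤ) (hc : ∀ i, 1 < c i)
    (L : Fin k' → Matrix (Fin 2) (Fin 2) ℤ)
    (hLmin : ∀ j, ∀ x : Fin 2 → ℤ, x ≠ 0 → 1 < x ⬝ᵥ (L j).mulVec x) :
    ¬ Represents
        (Matrix.fromBlocks
          (Matrix.diagonal (Sum.elim (fun _ : Fin 1 => (1 : ℤ)) c)) 0 0
          (Matrix.blockDiagonal L))
        (bin 1 0 1) := by
  have hdiag_nonneg : ∀ y, 0 ≤ y ⬝ᵥ diagonal (Sum.elim (fun _ : Fin 1 => (1 : ℤ)) c) *ᵥ y :=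
    dotProduct_diagonal_mulVec_nonneg
      (Sum.forall.mpr ⟨fun _ => zero_le_one, fun i => zero_le_one.trans (hc i).le⟩)
  have hdiag_one : ∀ y, y ⬝ᵥ diagonal (Sum.elim (fun _ : Fin 1 => (1 : ℤ)) c) *ᵥ y = 1 →
      y ∈ ℤ ∙ Sum.elim (1 : Fin 1 → ℤ) 0 := by
    intro y hy
    rw [← fromBlocks_diagonal] at hy
    refine mem_span_sumElim_of_fromBlocks_norm_eq_one
      (dotProduct_diagonal_mulVec_nonneg fun _ => zero_le_one)
      (fun z _ => Submodule.mem_span_singleton.mpr ⟨z 0, ?_⟩) (oneLtMin_diagonal hc) hy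
    ext i
    simp [Subsingleton.elim i 0]
  exact not_represents_bin_one_zero_one_of_mem_span fun x =>
    mem_span_sumElim_of_fromBlocks_norm_eq_one hdiag_nonneg hdiag_one
      (oneLtMin_blockDiagonal hLmin)

/-- if `c₁, …, c_k > 1` and `L₁, …, L_{k'}` are positive-definite binary
lattices of minimum `> 1`, then `⟨1⟩ ⊥ ⟨c₁⟩ ⊥ ⋯ ⊥ ⟨c_k⟩ ⊥ L₁ ⊥ ⋯ ⊥ L_{k'}` does not
represent `⟨1,1⟩ = x² + y²`. -/
theorem truant_one_one {k k' : ℕ} (c : Fin k → ℤ) (hc : ∀ i, 1 < c i)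
    (L : Fin k' → Matrix (Fin 2) (Fin 2) ℤ)
    (hLsymm : ∀ j, (L j).IsSymm)
    (hLmin : ∀ j, ∀ x : Fin 2 → ℤ, x ≠ 0 → 1 < x ⬝ᵥ (L j).mulVec x) :
    ¬ Represents
        (Matrix.fromBlocks
          (Matrix.diagonal (Sum.elim (fun _ : Fin 1 => (1 : ℤ)) c)) 0 0
          (Matrix.blockDiagonal L))
        (bin 1 0 1) :=
  truant_one_one_general c hc L hLmin
end

section
/- The lattice ⟨1,1⟩ ⊥ ⟨4⟩ ⊥ [2,1,5] does not represent the binary form ⟨2,3⟩ = 2x² + 3y². -/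
open Matrix

set_option maxHeartbeats 1600000 in
/-- the lattice `⟨1,1⟩ ⊥ ⟨4⟩ ⊥ [2,1,5]` does not represent
`⟨2,3⟩ = 2x² + 3y²`. -/
theorem example_truant_two_three :
    ¬ Represents
        (Matrix.fromBlocks (Matrix.diagonal ![(1 : ℤ), 1, 4]) 0 0 (bin 2 1 5))
        (bin 2 0 3) := by
  rintro ⟨S, -, hS⟩
  have h00 := congrFun (congrFun hS 0) 0
  have h11 := congrFun (congrFun hS 1) 1
  have h01 := congrFun (congrFun hS 0) 1
  simp [Matrix.mul_apply, Fintype.sum_sum_type, Fin.sum_univ_succ, bin, Matrix.fromBlocks,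
    Matrix.diagonal] at h00 h11 h01
  set a := S (Sum.inl 0) 0 with ha'
  set b := S (Sum.inl 1) 0
  set c := S (Sum.inl 2) 0
  set d := S (Sum.inr 0) 0
  set e := S (Sum.inr 1) 0
  set f := S (Sum.inl 0) 1
  set g := S (Sum.inl 1) 1
  set h := S (Sum.inl 2) 1
  set i := S (Sum.inr 0) 1
  set j := S (Sum.inr 1) 1
  have hc : c = 0 := by nlinarith [sq_nonneg a, sq_nonneg b, sq_nonneg (d+e), sq_nonneg d, sq_nonneg e, sq_nonneg c]
  have he : e = 0 := by nlinarith [sq_nonneg a, sq_nonneg b, sq_nonneg (d+e), sq_nonneg d, sq_nonneg c]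
  have hh : h = 0 := by nlinarith [sq_nonneg f, sq_nonneg g, sq_nonneg (i+j), sq_nonneg i, sq_nonneg j, sq_nonneg h]
  have hj : j = 0 := by nlinarith [sq_nonneg f, sq_nonneg g, sq_nonneg (i+j), sq_nonneg i, sq_nonneg h]
  simp only [hc, he, hh, hj] at h00 h11 h01
  have ha1 : -1 ≤ a := by nlinarith [sq_nonneg (a+1), sq_nonneg b, sq_nonneg d]
  have ha2 : a ≤ 1 := by nlinarith [sq_nonneg (a-1), sq_nonneg b, sq_nonneg d]
  have hb1 : -1 ≤ b := by nlinarith [sq_nonneg (b+1), sq_nonneg a, sq_nonneg d]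
  have hb2 : b ≤ 1 := by nlinarith [sq_nonneg (b-1), sq_nonneg a, sq_nonneg d]
  have hd1 : -1 ≤ d := by nlinarith [sq_nonneg (d+1), sq_nonneg a, sq_nonneg b]
  have hd2 : d ≤ 1 := by nlinarith [sq_nonneg (d-1), sq_nonneg a, sq_nonneg b]
  have hf1 : -1 ≤ f := by nlinarith [sq_nonneg (f+1), sq_nonneg g, sq_nonneg i]
  have hf2 : f ≤ 1 := by nlinarith [sq_nonneg (f-1), sq_nonneg g, sq_nonneg i]
  have hg1 : -1 ≤ g := by nlinarith [sq_nonneg (g+1), sq_nonneg f, sq_nonneg i]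
  have hg2 : g ≤ 1 := by nlinarith [sq_nonneg (g-1), sq_nonneg f, sq_nonneg i]
  have hi1 : -1 ≤ i := by nlinarith [sq_nonneg (i+1), sq_nonneg f, sq_nonneg g]
  have hi2 : i ≤ 1 := by nlinarith [sq_nonneg (i-1), sq_nonneg f, sq_nonneg g]
  interval_cases a <;> interval_cases b <;> interval_cases d <;>
    interval_cases f <;> interval_cases g <;> interval_cases i <;> omega
end

section
/- The lattice ⟨1,1⟩ ⊥ [2,1,5] (Gram matrix diag-block: ((1,0),(0,1)) ⊕ ((2,1),(1,5))) does not represent the binary form [2,1,2] with Gram matrix ((2,1),(1,2)). -/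
open Matrix

set_option maxHeartbeats 1000000 in
lemma keyA (a b c d : ℤ) (h1 : a^2 + b^2 + c*d*2 + c^2*2 + d^2*5 = 2) :
    d = 0 ∧ (-1 ≤ a ∧ a ≤ 1) ∧ (-1 ≤ b ∧ b ≤ 1) ∧ (-1 ≤ c ∧ c ≤ 1) := by
  have hd2 : d^2 ≤ 0 := by nlinarith [sq_nonneg a, sq_nonneg b, sq_nonneg (c+d), sq_nonneg c]
  have hd : d = 0 := by nlinarith [sq_nonneg d]
  subst hd
  refine ⟨rfl, ⟨?_, ?_⟩, ⟨?_, ?_⟩, ⟨?_, ?_⟩⟩ <;>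
    nlinarith [sq_nonneg a, sq_nonneg b, sq_nonneg c, sq_nonneg (a+1), sq_nonneg (a-1),
      sq_nonneg (b+1), sq_nonneg (b-1), sq_nonneg (c+1), sq_nonneg (c-1)]

set_option maxHeartbeats 4000000 in
lemma key (a b c d p q r s : ℤ)
    (h1 : a^2 + b^2 + c*d*2 + c^2*2 + d^2*5 = 2)
    (h2 : p^2 + q^2 + r*s*2 + r^2*2 + s^2*5 = 2)
    (h3 : a*p + b*q + c*r*2 + c*s + d*r + d*s*5 = 1) : False := by
  obtain ⟨hd, ⟨ha1, ha2⟩, ⟨hb1, hb2⟩, ⟨hc1, hc2⟩⟩ := keyA a b c d h1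
  obtain ⟨hs, ⟨hp1, hp2⟩, ⟨hq1, hq2⟩, ⟨hr1, hr2⟩⟩ := keyA p q r s h2
  subst hd hs
  interval_cases a <;> interval_cases b <;> interval_cases c <;>
    interval_cases p <;> interval_cases q <;> interval_cases r <;> omega

/-- the lattice `⟨1,1⟩ ⊥ [2,1,5]` (with the indicated block-diagonal
Gram matrix) does not represent `[2,1,2]`. -/
theorem example_truant_two_one_two :
    ¬ Represents (!![1, 0, 0, 0; 0, 1, 0, 0; 0, 0, 2, 1; 0, 0, 1, 5] :
        Matrix (Fin 4) (Fin 4) ℤ) (bin 2 1 2) := by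
  rintro ⟨S, -, hS⟩
  have h00 := congrFun (congrFun hS 0) 0
  have h11 := congrFun (congrFun hS 1) 1
  have h01 := congrFun (congrFun hS 0) 1
  simp [Matrix.mul_apply, Fin.sum_univ_succ, bin] at h00 h11 h01
  ring_nf at h00 h11 h01
  exact key _ _ _ _ _ _ _ _ h00 h11 h01
end
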